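/- Let n = 2 and 0 < α < 1. Let a_{ij} : ℝ² → ℝ be symmetric matrix-valued coefficients satisfying λ|ξ|² ≤ a_{ij}(x)ξ_iξ_j ≤ Λ|ξ|² for all ξ and such that a_{ij}(x) → δ_{ij} as |x| → ∞. Then there exists R_α > 1 such that v(x) = |x|^α satisfies a_{ij}(x) D_{ij}v(x) ≥ 0 for all |x| ≥ R_α. -/

import Mathlib

noncomputable def hess {n : ℕ} (f : EuclideanSpace ℝ (Fin n) → ℝ)
    (x : EuclideanSpace ℝ (Fin n)) (i j : Fin n) : ℝ :=
  fderiv ℝ (fun y => fderiv ℝ f y (EuclideanSpace.single j 1)) x (EuclideanSpace.single i 1)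

noncomputable def gsum (y : EuclideanSpace ℝ (Fin 2)) : ℝ := ∑ i, y i ^ 2

lemma gsum_eq (y : EuclideanSpace ℝ (Fin 2)) : gsum y = ‖y‖ ^ 2 := by
  rw [EuclideanSpace.norm_eq, Real.sq_sqrt (by positivity)]
  simp [gsum, sq_abs]

lemma gsum_pos {y : EuclideanSpace ℝ (Fin 2)} (hy : y ≠ 0) : 0 < gsum y := by
  rw [gsum_eq]
  exact pow_pos (norm_pos_iff.mpr hy) 2

lemma rpow_eq_gsum (α : ℝ) (y : EuclideanSpace ℝ (Fin 2)) :
    ‖y‖ ^ α = gsum y ^ (α / 2) := by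
  rw [gsum_eq, ← Real.rpow_natCast ‖y‖ 2, ← Real.rpow_mul (norm_nonneg y)]
  congr 1
  push_cast
  ring

lemma hasFDerivAt_gsum (y : EuclideanSpace ℝ (Fin 2)) :
    HasFDerivAt gsum
      (∑ i, (2 * y i) • (EuclideanSpace.proj i : EuclideanSpace ℝ (Fin 2) →L[ℝ] ℝ)) y := by
  have : HasFDerivAt gsum
      (∑ i, (((2 : ℕ) : ℝ) * (EuclideanSpace.proj (𝕜 := ℝ) i) y ^ (2 - 1)) •
        (EuclideanSpace.proj i : EuclideanSpace ℝ (Fin 2) →L[ℝ] ℝ)) y :=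
    HasFDerivAt.fun_sum fun i _ =>
      (hasDerivAt_pow 2 ((EuclideanSpace.proj (𝕜 := ℝ) i) y)).comp_hasFDerivAt y
        ((EuclideanSpace.proj i : EuclideanSpace ℝ (Fin 2) →L[ℝ] ℝ)).hasFDerivAt
  convert this using 2 with i
  simp

lemma proj_eval (y : EuclideanSpace ℝ (Fin 2)) (j : Fin 2) :
    (∑ i, (2 * y i) • (EuclideanSpace.proj i : EuclideanSpace ℝ (Fin 2) →L[ℝ] ℝ))
      (EuclideanSpace.single j 1) = 2 * y j := by
  simp [ContinuousLinearMap.sum_apply, EuclideanSpace.single_apply]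
  fin_cases j <;> simp

lemma hasFDerivAt_gsum_rpow (p : ℝ) {y : EuclideanSpace ℝ (Fin 2)} (hy : y ≠ 0) :
    HasFDerivAt (fun z => gsum z ^ p)
      ((p * gsum y ^ (p - 1)) •
        ∑ i, (2 * y i) • (EuclideanSpace.proj i : EuclideanSpace ℝ (Fin 2) →L[ℝ] ℝ)) y :=
  (Real.hasDerivAt_rpow_const (Or.inl (gsum_pos hy).ne')).comp_hasFDerivAt y
    (hasFDerivAt_gsum y)

lemma first_deriv (α : ℝ) {y : EuclideanSpace ℝ (Fin 2)} (hy : y ≠ 0) (j : Fin 2) :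
    fderiv ℝ (fun z : EuclideanSpace ℝ (Fin 2) => ‖z‖ ^ α) y (EuclideanSpace.single j 1)
      = α * gsum y ^ (α / 2 - 1) * y j := by
  have hfun : (fun z : EuclideanSpace ℝ (Fin 2) => ‖z‖ ^ α)
      = fun z => gsum z ^ (α / 2) := funext fun z => rpow_eq_gsum α z
  rw [hfun, (hasFDerivAt_gsum_rpow (α / 2) hy).fderiv]
  simp only [ContinuousLinearMap.coe_smul', Pi.smul_apply, proj_eval, smul_eq_mul]
  ring

lemma hess_formula (α : ℝ) {x : EuclideanSpace ℝ (Fin 2)} (hx : x ≠ 0) (i j : Fin 2) :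
    hess (fun y => ‖y‖ ^ α) x i j
      = α * gsum x ^ (α / 2 - 2) *
        ((if i = j then gsum x else 0) + (α - 2) * x i * x j) := by
  have hev : (fun y : EuclideanSpace ℝ (Fin 2) =>
      fderiv ℝ (fun z : EuclideanSpace ℝ (Fin 2) => ‖z‖ ^ α) y (EuclideanSpace.single j 1))
      =ᶠ[nhds x] fun y => α * gsum y ^ (α / 2 - 1) * y j :=
    (eventually_ne_nhds hx).mono fun y hy => first_deriv α hy j
  have h1 : HasFDerivAt (fun y : EuclideanSpace ℝ (Fin 2) => α * gsum y ^ (α / 2 - 1))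
      (α • ((α / 2 - 1) * gsum x ^ (α / 2 - 1 - 1)) •
        ∑ k, (2 * x k) • (EuclideanSpace.proj k : EuclideanSpace ℝ (Fin 2) →L[ℝ] ℝ)) x :=
    (hasFDerivAt_gsum_rpow (α / 2 - 1) hx).const_mul α
  have h2 := ((EuclideanSpace.proj j : EuclideanSpace ℝ (Fin 2) →L[ℝ] ℝ)).hasFDerivAt (x := x)
  have hmul : HasFDerivAt (fun y : EuclideanSpace ℝ (Fin 2) =>
      α * gsum y ^ (α / 2 - 1) * y j) _ x := h1.mul h2
  unfold hess
  rw [hev.fderiv_eq, hmul.fderiv]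
  have hproj : (EuclideanSpace.proj (𝕜 := ℝ) j) (EuclideanSpace.single i (1:ℝ))
      = if i = j then 1 else 0 := by
    simp [EuclideanSpace.single_apply]
    exact if_congr eq_comm rfl rfl
  have hs := gsum_pos hx
  have hpow : gsum x ^ (α / 2 - 1) = gsum x ^ (α / 2 - 2) * gsum x := by
    rw [show α / 2 - 1 = (α / 2 - 2) + 1 by ring, Real.rpow_add hs, Real.rpow_one]
  simp only [ContinuousLinearMap.add_apply, ContinuousLinearMap.coe_smul', Pi.smul_apply,
    proj_eval, hproj, smul_eq_mul]
  rw [hpow]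
  by_cases h : i = j <;> simp [h] <;> ring

theorem stmt2 (a : EuclideanSpace ℝ (Fin 2) → Matrix (Fin 2) (Fin 2) ℝ)
    (lam Lam : ℝ) (hlam : 0 < lam) (hLam : lam ≤ Lam)
    (hsymm : ∀ x i j, a x i j = a x j i)
    (hell : ∀ (x ξ : EuclideanSpace ℝ (Fin 2)),
      lam * ‖ξ‖ ^ 2 ≤ ∑ i, ∑ j, a x i j * ξ i * ξ j ∧
        ∑ i, ∑ j, a x i j * ξ i * ξ j ≤ Lam * ‖ξ‖ ^ 2)
    (hconv : ∀ ε > (0 : ℝ), ∃ R : ℝ, ∀ x : EuclideanSpace ℝ (Fin 2), R ≤ ‖x‖ → ∀ i j,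
      |a x i j - (if i = j then (1 : ℝ) else 0)| < ε)
    (α : ℝ) (hα0 : 0 < α) (hα1 : α < 1) :
    ∃ R > (1 : ℝ), ∀ x : EuclideanSpace ℝ (Fin 2), R ≤ ‖x‖ →
      0 ≤ ∑ i, ∑ j, a x i j * hess (fun y => ‖y‖ ^ α) x i j := by
  obtain ⟨R, hR⟩ := hconv (α / 8) (by positivity)
  refine ⟨max R 2, lt_of_lt_of_le one_lt_two (le_max_right _ _), fun x hx => ?_⟩
  have hx2 : (2 : ℝ) ≤ ‖x‖ := le_trans (le_max_right _ _) hx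
  have hxne : x ≠ 0 := by
    intro h; rw [h, norm_zero] at hx2; linarith
  have hb := hR x (le_trans (le_max_left _ _) hx)
  have h00 := abs_lt.mp (by simpa using hb 0 0)
  have h11 := abs_lt.mp (by simpa using hb 1 1)
  have h01 := abs_lt.mp (by simpa using hb 0 1)
  have h10 := abs_lt.mp (by simpa using hb 1 0)
  have hs : gsum x = x 0 ^ 2 + x 1 ^ 2 := by
    simp [gsum, Fin.sum_univ_two]
  have hspos : 0 < gsum x := gsum_pos hxne
  have key : ∑ i, ∑ j, a x i j * hess (fun y => ‖y‖ ^ α) x i j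
      = α * gsum x ^ (α / 2 - 2) *
        ((a x 0 0 + a x 1 1) * gsum x +
          (α - 2) * (a x 0 0 * x 0 ^ 2 + a x 0 1 * x 0 * x 1 +
            a x 1 0 * x 1 * x 0 + a x 1 1 * x 1 ^ 2)) := by
    simp only [Fin.sum_univ_two, hess_formula α hxne]
    norm_num
    ring
  rw [key]
  have hB : 0 ≤ (a x 0 0 + a x 1 1) * gsum x +
      (α - 2) * (a x 0 0 * x 0 ^ 2 + a x 0 1 * x 0 * x 1 +
        a x 1 0 * x 1 * x 0 + a x 1 1 * x 1 ^ 2) := by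
    rw [hs]
    nlinarith [mul_nonneg (by linarith [h01.2] : (0:ℝ) ≤ α/8 - a x 0 1) (sq_nonneg (x 0 - x 1)),
      mul_nonneg (by linarith [h01.1] : (0:ℝ) ≤ α/8 + a x 0 1) (sq_nonneg (x 0 + x 1)),
      mul_nonneg (by linarith [h10.2] : (0:ℝ) ≤ α/8 - a x 1 0) (sq_nonneg (x 0 - x 1)),
      mul_nonneg (by linarith [h10.1] : (0:ℝ) ≤ α/8 + a x 1 0) (sq_nonneg (x 0 + x 1)),
      mul_nonneg (by linarith [h00.2] : (0:ℝ) ≤ α/8 - (a x 0 0 - 1)) (sq_nonneg (x 0)),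
      mul_nonneg (by linarith [h00.1] : (0:ℝ) ≤ α/8 + (a x 0 0 - 1)) (sq_nonneg (x 0)),
      mul_nonneg (by linarith [h11.2] : (0:ℝ) ≤ α/8 - (a x 1 1 - 1)) (sq_nonneg (x 1)),
      mul_nonneg (by linarith [h11.1] : (0:ℝ) ≤ α/8 + (a x 1 1 - 1)) (sq_nonneg (x 1)),
      mul_nonneg (by linarith [h00.1] : (0:ℝ) ≤ α/8 + (a x 0 0 - 1)) (sq_nonneg (x 1)),
      mul_nonneg (by linarith [h11.1] : (0:ℝ) ≤ α/8 + (a x 1 1 - 1)) (sq_nonneg (x 0)),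
      mul_pos hα0 (show (0:ℝ) < x 0 ^ 2 + x 1 ^ 2 by rw [← hs]; exact hspos)]
  exact mul_nonneg (mul_nonneg hα0.le (Real.rpow_nonneg hspos.le _)) hB
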